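/- arXiv:1703.10377 — 2 statements merged into one kernel-verified Lean document; each statement's English description precedes it below -/
import Mathlib

section
/- Let Q be a set of prime numbers having natural density c > 0 within the primes, i.e. #{p ∈ Q : p ≤ x} / #{p prime : p ≤ x} → c as x → ∞. Then there exists x₀ > 0 such that for all x ≥ x₀ one has Σ_{p ∈ Q, p ≤ x} (log p)/p ≥ (c/2)·log x. -/
/-!
Partial summation against the weight `f n = log n / n`, which decreases for `n ≥ 3`. If
`A n` and `π n` count the elements of `Q` and the primes up to `n`, then `A n ≥ κ π n`
eventually for every `κ < c`, and this makes
`N ↦ ∑_{k ≤ N} (1_Q k - κ 1_prime k) (f k - f N)` eventually monotone. Hence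
`∑_{p ∈ Q, p ≤ N} f p ≥ κ (∑_{p ≤ N} f p - π N f N) - O(1)`. Mertens' bound
`∑_{p ≤ N} log p / p ≥ log N - O(1)` (Legendre's formula for `log N!` against Stirling) and
Chebyshev's bound `π N f N = O(1)` turn the right side into `κ log N - O(1)`; take
`κ = 3c/4 > c/2`.
-/

open Filter Real Finset
open scoped Nat

theorem log_factorial_le_mul_sum_primesLE (N : ℕ) :
    log (N ! : ℕ) ≤ N * ∑ p ∈ Nat.primesLE N, log p / (p - 1) := by
  have hsupp : (N !).primeFactors ⊆ Nat.primesLE N := fun p hp ↦ by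
    have hp' := Nat.prime_of_mem_primeFactors hp
    exact Nat.mem_primesLE.2 ⟨hp'.dvd_factorial.1 (Nat.dvd_of_mem_primeFactors hp), hp'⟩
  rw [log_nat_eq_sum_factorization, Finsupp.sum, Nat.support_factorization, mul_sum]
  refine (sum_le_sum_of_subset_of_nonneg hsupp fun p _ _ ↦ ?_).trans
    (sum_le_sum fun p hp ↦ ?_)
  · exact mul_nonneg (Nat.cast_nonneg _) (log_natCast_nonneg p)
  · have hp := (Nat.mem_primesLE.1 hp).2
    have hdiv := Nat.cast_div_le (α := ℝ) (m := N) (n := p - 1)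
    rw [Nat.cast_sub hp.one_le, Nat.cast_one] at hdiv
    calc ((N !).factorization p : ℝ) * log p ≤ ((N / (p - 1) : ℕ) : ℝ) * log p := by
          gcongr
          exact Nat.factorization_factorial_le_div_pred hp N
      _ ≤ N / (p - 1) * log p := by gcongr
      _ = N * (log p / (p - 1)) := by ring

theorem log_sub_one_le_sum_primesLE_log_div_sub_one {N : ℕ} (hN : N ≠ 0) :
    log N - 1 ≤ ∑ p ∈ Nat.primesLE N, log p / (p - 1) := by
  have hN' : (0 : ℝ) < N := by positivity
  have hstirling := Stirling.le_log_factorial_stirling hN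
  have hlogN := log_natCast_nonneg N
  have hlog2π : 0 ≤ log (2 * π) := log_nonneg (by linarith [pi_gt_three])
  have := log_factorial_le_mul_sum_primesLE N
  rw [← mul_le_mul_iff_right₀ hN']
  linarith

theorem log_div_mul_sub_one_le {x : ℝ} (hx : 2 ≤ x) :
    log x / (x * (x - 1)) ≤ 4 * (x ^ (3 / 2 : ℝ))⁻¹ := by
  have hx0 : 0 < x := by linarith
  have hsqrt : 0 < √x := sqrt_pos.2 hx0
  have hpow : x ^ (3 / 2 : ℝ) = x * √x := by
    rw [sqrt_eq_rpow, ← rpow_one_add' hx0.le (by norm_num)]; norm_num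
  have hlog : log x ≤ 2 * √x := calc
    log x ≤ x ^ (1 / 2 : ℝ) / (1 / 2) := log_le_rpow_div hx0.le (by norm_num)
    _ = 2 * √x := by rw [sqrt_eq_rpow]; ring
  have hsq := sq_sqrt hx0.le
  rw [hpow, ← div_eq_mul_inv, div_le_div_iff₀ (by nlinarith) (by positivity)]
  calc log x * (x * √x) ≤ 2 * √x * (x * √x) := by gcongr
    _ ≤ 4 * (x * (x - 1)) := by nlinarith

theorem log_div_mul_sub_one_nonneg (n : ℕ) : 0 ≤ log n / (n * (n - 1)) := by
  rcases n with _ | n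
  · simp
  · exact div_nonneg (log_natCast_nonneg _) (mul_nonneg (by positivity) (by simp))

theorem summable_log_div_mul_sub_one :
    Summable fun n : ℕ ↦ log n / (n * (n - 1)) := by
  refine ((summable_nat_rpow_inv.2 (by norm_num : (1 : ℝ) < 3 / 2)).mul_left 4).of_nonneg_of_le
    (fun n ↦ ?_) (fun n ↦ ?_)
  · exact log_div_mul_sub_one_nonneg n
  · rcases lt_or_ge n 2 with hn | hn
    · interval_cases n <;> simp
    · exact log_div_mul_sub_one_le (by exact_mod_cast hn)

theorem exists_log_sub_le_sum_primesLE_log_div :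
    ∃ C, ∀ N : ℕ, N ≠ 0 → log N - C ≤ ∑ p ∈ Nat.primesLE N, log p / p := by
  refine ⟨1 + ∑' n : ℕ, log n / (n * (n - 1)), fun N hN ↦ ?_⟩
  have htail : ∑ p ∈ Nat.primesLE N, log p / (p * (p - 1)) ≤ ∑' n : ℕ, log n / (n * (n - 1)) :=
    summable_log_div_mul_sub_one.sum_le_tsum _ fun n _ ↦ log_div_mul_sub_one_nonneg n
  have hsplit : ∑ p ∈ Nat.primesLE N, log p / (p - 1) =
      ∑ p ∈ Nat.primesLE N, log p / p + ∑ p ∈ Nat.primesLE N, log p / (p * (p - 1)) := by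
    rw [← sum_add_distrib]
    refine sum_congr rfl fun p hp ↦ ?_
    have hp := (Nat.mem_primesLE.1 hp).2
    have hp1 : (p : ℝ) - 1 ≠ 0 := sub_ne_zero.2 (by exact_mod_cast hp.ne_one)
    have hp0 : (p : ℝ) ≠ 0 := by exact_mod_cast hp.ne_zero
    field_simp
    ring
  linarith [log_sub_one_le_sum_primesLE_log_div_sub_one hN]

theorem eventually_card_primesLE_mul_log_div_le :
    ∀ᶠ N : ℕ in atTop, #(Nat.primesLE N) * (log N / N) ≤ log 4 + 1 := by
  filter_upwards [tendsto_natCast_atTop_atTop.eventually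
    (Chebyshev.eventually_primeCounting_le one_pos), eventually_ge_atTop 2] with N hπ hN
  have hlog : 0 < log N := log_pos (by exact_mod_cast hN)
  have hN0 : (0 : ℝ) < N := by positivity
  rw [Nat.floor_natCast, ← Nat.primesLE_card_eq_primeCounting, le_div_iff₀ hlog] at hπ
  rw [mul_div_assoc', div_le_iff₀ hN0]
  exact hπ

theorem log_div_self_succ_le {n : ℕ} (hn : 3 ≤ n) :
    log (n + 1 : ℕ) / (n + 1 : ℕ) ≤ log n / n := by
  have h3 : exp 1 ≤ n := by
    have : (3 : ℝ) ≤ n := by exact_mod_cast hn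
    linarith [exp_one_lt_three]
  exact log_div_self_antitoneOn h3 (h3.trans (by simp)) (by simp)

theorem monotoneOn_sum_mul_sub {a f : ℕ → ℝ} {T : ℕ}
    (ha : ∀ n ≥ T, 0 ≤ ∑ k ∈ range (n + 1), a k) (hf : ∀ n ≥ T, f (n + 1) ≤ f n) :
    MonotoneOn (fun N ↦ ∑ k ∈ range (N + 1), a k * (f k - f N)) (Set.Ici T) := by
  refine monotoneOn_nat_Ici_of_le_succ fun n hn ↦ ?_
  have hstep : ∑ k ∈ range (n + 1 + 1), a k * (f k - f (n + 1)) =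
      ∑ k ∈ range (n + 1), a k * (f k - f n) + (∑ k ∈ range (n + 1), a k) * (f n - f (n + 1)) := by
    rw [sum_range_succ, sub_self, mul_zero, add_zero, sum_mul, ← sum_add_distrib]
    exact sum_congr rfl fun k _ ↦ by ring
  simp only [hstep]
  have := mul_nonneg (ha n hn) (sub_nonneg.2 (hf n hn))
  linarith

theorem exists_le_sum_filter_sub_of_eventually_mul_card_le {s t : ℕ → Prop} [DecidablePred s]
    [DecidablePred t] {κ : ℝ} {f : ℕ → ℝ}
    (hst : ∀ᶠ n in atTop, κ * #{k ∈ range (n + 1) | t k} ≤ #{k ∈ range (n + 1) | s k})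
    (hf : ∀ᶠ n in atTop, f (n + 1) ≤ f n) :
    ∃ C, ∀ᶠ N in atTop, κ * ∑ k ∈ range (N + 1) with t k, (f k - f N) + C ≤
      ∑ k ∈ range (N + 1) with s k, (f k - f N) := by
  set a : ℕ → ℝ := fun k ↦ (if s k then 1 else 0) - κ * if t k then 1 else 0
  have hG (N : ℕ) : ∑ k ∈ range (N + 1), a k * (f k - f N) =
      ∑ k ∈ range (N + 1) with s k, (f k - f N) -
        κ * ∑ k ∈ range (N + 1) with t k, (f k - f N) := by
    simp only [a, sum_filter, mul_sum, ← sum_sub_distrib]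
    exact sum_congr rfl fun k _ ↦ by split_ifs <;> ring
  obtain ⟨T, hT⟩ := eventually_atTop.1 (hst.and hf)
  have ha (n : ℕ) (hn : n ≥ T) : 0 ≤ ∑ k ∈ range (n + 1), a k := by
    simp only [a, sum_sub_distrib, ← mul_sum, sum_boole]
    linarith [(hT n hn).1]
  refine ⟨∑ k ∈ range (T + 1), a k * (f k - f T), eventually_atTop.2 ⟨T, fun N hN ↦ ?_⟩⟩
  have := monotoneOn_sum_mul_sub ha (fun n hn ↦ (hT n hn).2) (Set.mem_Ici.2 le_rfl)
    (Set.mem_Ici.2 hN) hN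
  simp only [hG] at this ⊢
  linarith

theorem exists_mul_log_sub_le_sum_filter_log_div (s : ℕ → Prop) [DecidablePred s] {κ : ℝ}
    (hκ : 0 ≤ κ) (hs : ∀ᶠ n in atTop, κ * #(Nat.primesLE n) ≤ #{k ∈ range (n + 1) | s k}) :
    ∃ C, ∀ᶠ N : ℕ in atTop, κ * log N - C ≤ ∑ k ∈ range (N + 1) with s k, log k / k := by
  obtain ⟨C₀, hC₀⟩ := exists_le_sum_filter_sub_of_eventually_mul_card_le (t := Nat.Prime)
    (f := fun n : ℕ ↦ log n / n) hs (eventually_atTop.2 ⟨3, fun n hn ↦ log_div_self_succ_le hn⟩)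
  obtain ⟨C₁, hC₁⟩ := exists_log_sub_le_sum_primesLE_log_div
  refine ⟨κ * (C₁ + log 4 + 1) - C₀, ?_⟩
  filter_upwards [hC₀, eventually_card_primesLE_mul_log_div_le, eventually_ne_atTop 0]
    with N hN hπ hN0
  simp only [sum_sub_distrib, sum_const, nsmul_eq_mul, ← Nat.primesLE_eq_filter_range] at hN
  have hfN : 0 ≤ #{k ∈ range (N + 1) | s k} * (log N / N) := by positivity
  have hmertens : log N - C₁ - (log 4 + 1) ≤
      ∑ p ∈ Nat.primesLE N, log p / p - #(Nat.primesLE N) * (log N / N) := by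
    linarith [hC₁ N hN0]
  calc κ * log N - (κ * (C₁ + log 4 + 1) - C₀) = κ * (log N - C₁ - (log 4 + 1)) + C₀ := by ring
    _ ≤ κ * (∑ p ∈ Nat.primesLE N, log p / p - #(Nat.primesLE N) * (log N / N)) + C₀ := by gcongr
    _ ≤ _ := by linarith

theorem setOf_and_cast_le_eq_coe_filter (P : ℕ → Prop) [DecidablePred P] {x : ℝ} (hx : 0 ≤ x) :
    {p : ℕ | P p ∧ (p : ℝ) ≤ x} = ↑{p ∈ range (⌊x⌋₊ + 1) | P p} := by
  ext p
  simp [Nat.le_floor_iff hx, and_comm]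

theorem eventually_mul_card_primesLE_le_card_filter (Q : Set ℕ) [DecidablePred (· ∈ Q)]
    {c κ : ℝ} (hκ : κ < c)
    (hdens : Tendsto (fun x : ℝ =>
        (({p | p ∈ Q ∧ (p : ℝ) ≤ x}.ncard : ℝ) /
          ({p : ℕ | p.Prime ∧ (p : ℝ) ≤ x}.ncard : ℝ)))
      atTop (nhds c)) :
    ∀ᶠ n : ℕ in atTop, κ * #(Nat.primesLE n) ≤ #{k ∈ range (n + 1) | k ∈ Q} := by
  filter_upwards [(hdens.comp tendsto_natCast_atTop_atTop).eventually (eventually_gt_nhds hκ),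
    eventually_ge_atTop 2] with n hn hn2
  have hprimes : 0 < #(Nat.primesLE n) :=
    card_pos.2 ⟨2, Nat.mem_primesLE.2 ⟨hn2, Nat.prime_two⟩⟩
  simp only [Function.comp_apply, setOf_and_cast_le_eq_coe_filter (· ∈ Q) n.cast_nonneg,
    setOf_and_cast_le_eq_coe_filter Nat.Prime n.cast_nonneg, Set.ncard_coe_finset,
    Nat.floor_natCast] at hn
  rw [lt_div_iff₀ (by exact_mod_cast hprimes)] at hn
  exact hn.le

theorem eventually_mul_log_le_comp_floor {g : ℕ → ℝ} {κ μ C : ℝ} (hκ : 0 ≤ κ) (hμ : μ < κ)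
    (hg : ∀ᶠ N : ℕ in atTop, κ * log N - C ≤ g N) :
    ∀ᶠ x : ℝ in atTop, μ * log x ≤ g ⌊x⌋₊ := by
  filter_upwards [tendsto_nat_floor_atTop.eventually hg, eventually_ge_atTop 1,
    tendsto_log_atTop.eventually_ge_atTop ((C + κ * log 2) / (κ - μ))] with x hgx hx hlogx
  have hN : (1 : ℝ) ≤ ⌊x⌋₊ := by exact_mod_cast Nat.one_le_floor_iff _ |>.2 hx
  have hfloor : log x ≤ log 2 + log ⌊x⌋₊ := by
    rw [← log_mul two_ne_zero (by positivity)]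
    exact log_le_log (by linarith) (by linarith [Nat.lt_floor_add_one x])
  rw [div_le_iff₀ (sub_pos.2 hμ)] at hlogx
  nlinarith [mul_le_mul_of_nonneg_left hfloor hκ]

theorem stmt_1_general (Q : Set ℕ) (c : ℝ) (hc : 0 < c)
    (hdens : Tendsto (fun x : ℝ =>
        (({p | p ∈ Q ∧ (p : ℝ) ≤ x}.ncard : ℝ) /
          ({p : ℕ | p.Prime ∧ (p : ℝ) ≤ x}.ncard : ℝ)))
      atTop (nhds c)) :
    ∃ x₀ : ℝ, 0 < x₀ ∧ ∀ x ≥ x₀,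
      (c / 2) * Real.log x ≤
        ∑ᶠ p ∈ {p : ℕ | p ∈ Q ∧ (p : ℝ) ≤ x}, Real.log p / p := by
  classical
  obtain ⟨C, hC⟩ := exists_mul_log_sub_le_sum_filter_log_div (· ∈ Q)
    (by positivity : 0 ≤ 3 * c / 4)
    (eventually_mul_card_primesLE_le_card_filter Q (by linarith) hdens)
  obtain ⟨x₀, hx₀⟩ := eventually_atTop.1 <|
    eventually_mul_log_le_comp_floor (μ := c / 2) (by positivity) (by linarith) hC
  refine ⟨max x₀ 1, by positivity, fun x hx ↦ ?_⟩
  rw [setOf_and_cast_le_eq_coe_filter (· ∈ Q) (by linarith [le_of_max_le_right hx]),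
    finsum_mem_coe_finset]
  exact hx₀ x (le_of_max_le_left hx)

/-- If a set `Q` of primes has natural density `c > 0` within the primes,
then there exists `x₀ > 0` such that for all `x ≥ x₀` one has
`∑_{p ∈ Q, p ≤ x} (log p)/p ≥ (c/2)·log x`. -/
theorem stmt_1 (Q : Set ℕ) (hQ : ∀ p ∈ Q, p.Prime) (c : ℝ) (hc : 0 < c)
    (hdens : Tendsto (fun x : ℝ =>
        (({p | p ∈ Q ∧ (p : ℝ) ≤ x}.ncard : ℝ) /
          ({p : ℕ | p.Prime ∧ (p : ℝ) ≤ x}.ncard : ℝ)))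
      atTop (nhds c)) :
    ∃ x₀ : ℝ, 0 < x₀ ∧ ∀ x ≥ x₀,
      (c / 2) * Real.log x ≤
        ∑ᶠ p ∈ {p : ℕ | p ∈ Q ∧ (p : ℝ) ≤ x}, Real.log p / p :=
  stmt_1_general Q c hc hdens
end

section
/- Let (a_n)_{n ≥ 1} and (b_n)_{n ≥ 1} be sequences of nonnegative real numbers with a_n ≤ b_n for all n. Suppose that Σ_{n ≤ x} b_n is asymptotically equivalent to x/log x as x → ∞, and that the ratio (Σ_{n ≤ x} a_n) / (Σ_{n ≤ x} b_n) converges to a constant c > 0 as x → ∞. Then Σ_{n ≤ x} a_n·(log n)/n is asymptotically equivalent to c·(log x − log log x) as x → ∞. -/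
/-!
Write `A(x) = ∑_{n ≤ x} a_n`, so that `A(x) ∼ c x / log x`. Abel summation against `log t / t`
gives `∑_{n ≤ x} a_n log n / n = A(x) log x / x + ∫_1^x A(t) (log t - 1) / t² dt`.
The boundary term tends to `c`, and the integrand is asymptotic to `c (log t - 1) / (t log t)`,
the derivative of `c (log t - log log t)`. Since this primitive tends to infinity, integrating
the asymptotic equivalence gives the claim.
-/

open Filter Real Set Asymptotics MeasureTheory intervalIntegral Topology

theorem Asymptotics.IsEquivalent.intervalIntegral_of_nonneg {f g : ℝ → ℝ} {a : ℝ}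
    (hfg : f ~[atTop] g) (hg : ∀ᶠ t in atTop, 0 ≤ g t)
    (hf : ∀ b ≥ a, IntervalIntegrable f volume a b)
    (hgi : ∀ b ≥ a, IntervalIntegrable g volume a b)
    (hG : Tendsto (fun x => ∫ t in a..x, g t) atTop atTop) :
    (fun x => ∫ t in a..x, f t) ~[atTop] fun x => ∫ t in a..x, g t := by
  refine IsLittleO.isEquivalent (isLittleO_iff.mpr fun ε hε => ?_)
  obtain ⟨T, hT⟩ := eventually_atTop.mp ((hfg.isLittleO.bound (half_pos hε)).and hg)
  set T' := max a T
  have haT : a ≤ T' := le_max_left a T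
  set D := ∫ t in a..T', (f t - g t)
  -- beyond `T'` the error is at most `ε/2` times the integral of `g`; the error `D` up to `T'`
  -- is eventually absorbed into the other `ε/2` because `∫ g → ∞`
  filter_upwards [eventually_ge_atTop T', hG.eventually_ge_atTop 0,
    hG.eventually_ge_atTop ((‖D‖ - ε / 2 * ∫ t in a..T', g t) / (ε / 2))] with x hxT hG0 hGD
  have hax : a ≤ x := haT.trans hxT
  have hsplit : (∫ t in a..x, f t) - ∫ t in a..x, g t = D + ∫ t in T'..x, (f t - g t) := by
    rw [← integral_sub (hf x hax) (hgi x hax), integral_add_adjacent_intervals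
      ((hf T' haT).sub (hgi T' haT)) (((hf T' haT).sub (hgi T' haT)).symm.trans
        ((hf x hax).sub (hgi x hax)))]
  have htail : ‖∫ t in T'..x, (f t - g t)‖
      ≤ ε / 2 * ((∫ t in a..x, g t) - ∫ t in a..T', g t) := by
    rw [integral_interval_sub_left (hgi x hax) (hgi T' haT),
      ← intervalIntegral.integral_const_mul]
    refine norm_integral_le_of_norm_le hxT (ae_of_all _ fun t ht => ?_)
      (((hgi T' haT).symm.trans (hgi x hax)).const_mul _)
    obtain ⟨hfgt, hgt⟩ := hT t ((le_max_right a T).trans ht.1.le)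
    rwa [Real.norm_of_nonneg hgt] at hfgt
  rw [Pi.sub_apply, hsplit, Real.norm_of_nonneg hG0]
  rw [div_le_iff₀ (half_pos hε)] at hGD
  linarith [norm_add_le D (∫ t in T'..x, (f t - g t))]

theorem hasDerivAt_log_sub_log_log {t : ℝ} (ht : 1 < t) :
    HasDerivAt (fun u => log u - log (log u)) ((log t - 1) / (t * log t)) t := by
  have ht0 : t ≠ 0 := by positivity
  have hlog : log t ≠ 0 := (log_pos ht).ne'
  exact ((hasDerivAt_log ht0).sub ((hasDerivAt_log ht0).log hlog)).congr_deriv (by field_simp)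

theorem continuousOn_log_sub_one_div_mul_log :
    ContinuousOn (fun t => (log t - 1) / (t * log t)) (Ioi 1) := fun t ht => by
  have : 0 < log t := log_pos ht
  have : 0 < t := by linarith [mem_Ioi.mp ht]
  exact ContinuousAt.continuousWithinAt (by fun_prop (disch := positivity))

theorem continuousOn_log_sub_one_div_sq :
    ContinuousOn (fun t => (log t - 1) / t ^ 2) (Ioi 0) := fun t ht => by
  have : 0 < t := ht
  exact ContinuousAt.continuousWithinAt (by fun_prop (disch := positivity))

theorem integral_log_sub_one_div_mul_log {a b : ℝ} (ha : 1 < a) (hb : 1 < b) :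
    ∫ t in a..b, (log t - 1) / (t * log t) = (log b - log (log b)) - (log a - log (log a)) :=
  integral_eq_sub_of_hasDerivAt
    (fun _ ht => hasDerivAt_log_sub_log_log (ordConnected_Ioi.uIcc_subset ha hb ht))
    (continuousOn_log_sub_one_div_mul_log.mono
      (ordConnected_Ioi.uIcc_subset ha hb)).intervalIntegrable

theorem tendsto_log_sub_log_log_atTop :
    Tendsto (fun x => log x - log (log x)) atTop atTop := by
  have h : id ~[atTop] fun y => y - log y :=
    (IsEquivalent.refl.sub_isLittleO isLittleO_log_id_atTop).symm
  exact (h.tendsto_atTop tendsto_id).comp tendsto_log_atTop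

section CountingFunction

variable {A : ℝ → ℝ} {c : ℝ}

theorem isEquivalent_log_sub_one_div_sq_mul (hc : c ≠ 0)
    (hAc : Tendsto (fun t => A t / (t / log t)) atTop (𝓝 c)) :
    (fun t => (log t - 1) / t ^ 2 * A t) ~[atTop] fun t => c * ((log t - 1) / (t * log t)) := by
  refine (((isEquivalent_const_iff_tendsto hc).mpr hAc).mul
    (IsEquivalent.refl (u := fun t => (log t - 1) / (t * log t)))).congr_left ?_
  filter_upwards [eventually_gt_atTop 1] with t ht
  have := log_pos ht
  have : 0 < t := by linarith
  simp only [Pi.mul_apply]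
  field_simp

theorem isEquivalent_integral_log_sub_one_div_sq_mul (hc : 0 < c)
    (hA : ∀ s t, IntervalIntegrable A volume s t)
    (hAc : Tendsto (fun t => A t / (t / log t)) atTop (𝓝 c)) :
    (fun x => ∫ t in 1..x, (log t - 1) / t ^ 2 * A t)
      ~[atTop] fun x => c * (log x - log (log x)) := by
  have hf_int : ∀ {s t : ℝ}, 0 < s → 0 < t →
      IntervalIntegrable (fun t => (log t - 1) / t ^ 2 * A t) volume s t := fun hs ht =>
    (hA _ _).continuousOn_mul
      (continuousOn_log_sub_one_div_sq.mono (ordConnected_Ioi.uIcc_subset hs ht))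
  -- `(log t - 1) / (t log t)` is not integrable at `1`, so the comparison starts at `2`
  have hg_int : ∀ b ≥ 2,
      IntervalIntegrable (fun t => c * ((log t - 1) / (t * log t))) volume 2 b := fun b hb =>
    ((continuousOn_log_sub_one_div_mul_log.mono (ordConnected_Ioi.uIcc_subset one_lt_two
      (show (1 : ℝ) < b by linarith))).intervalIntegrable).const_mul c
  have hG : (fun x => ∫ t in 2..x, c * ((log t - 1) / (t * log t)))
      =ᶠ[atTop] fun x => c * (log x - log (log x)) + -(c * (log 2 - log (log 2))) := by
    filter_upwards [eventually_ge_atTop 2] with x hx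
    rw [intervalIntegral.integral_const_mul,
      integral_log_sub_one_div_mul_log one_lt_two (by linarith), mul_sub, sub_eq_add_neg]
  have hg_nonneg : ∀ᶠ t in atTop, 0 ≤ c * ((log t - 1) / (t * log t)) := by
    filter_upwards [eventually_ge_atTop (exp 1)] with t ht
    have ht0 : 0 < t := (exp_pos 1).trans_le ht
    have hlog : 1 ≤ log t := (le_log_iff_exp_le ht0).mpr ht
    have : 0 ≤ log t - 1 := by linarith
    positivity
  have hcL := tendsto_log_sub_log_log_atTop.const_mul_atTop hc
  have hnorm : Tendsto (norm ∘ fun x => c * (log x - log (log x))) atTop atTop :=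
    tendsto_norm_atTop_atTop.comp hcL
  have htail := (isEquivalent_log_sub_one_div_sq_mul hc.ne' hAc).intervalIntegral_of_nonneg
    hg_nonneg (fun b hb => hf_int two_pos (by linarith)) hg_int
    ((tendsto_atTop_add_const_right _ _ hcL).congr' hG.symm)
  have hfrom2 : (fun x => ∫ t in 2..x, (log t - 1) / t ^ 2 * A t)
      ~[atTop] fun x => c * (log x - log (log x)) :=
    htail.trans ((IsEquivalent.refl.add_const_of_norm_tendsto_atTop hnorm).congr_left hG.symm)
  refine (hfrom2.const_add_of_norm_tendsto_atTop hnorm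
    (c := ∫ t in 1..2, (log t - 1) / t ^ 2 * A t)).congr_left ?_
  filter_upwards [eventually_gt_atTop 0] with x hx
  exact integral_add_adjacent_intervals (hf_int one_pos two_pos) (hf_int two_pos hx)

end CountingFunction

theorem sum_Icc_zero_mul_update_zero (g a : ℕ → ℝ) (m : ℕ) :
    ∑ k ∈ Finset.Icc 0 m, g k * Function.update a 0 0 k
      = ∑ k ∈ Finset.Icc 1 m, g k * a k := by
  rw [Finset.Icc_eq_cons_Ioc (Nat.zero_le m), Finset.sum_cons, ← Finset.Icc_succ_left_eq_Ioc,
    Function.update_self, mul_zero, zero_add]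
  refine Finset.sum_congr rfl fun k hk => ?_
  rw [Function.update_of_ne (by grind)]

theorem sum_Icc_mul_log_div_eq (a : ℕ → ℝ) {x : ℝ} (hx : 1 ≤ x) :
    ∑ n ∈ Finset.Icc 1 ⌊x⌋₊, a n * log n / n
      = log x / x * ∑ n ∈ Finset.Icc 1 ⌊x⌋₊, a n
        + ∫ t in 1..x, (log t - 1) / t ^ 2 * ∑ n ∈ Finset.Icc 1 ⌊t⌋₊, a n := by
  have hderiv : ∀ t ≠ 0, deriv (fun u => log u / u) t = -((log t - 1) / t ^ 2) := by
    intro t ht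
    rw [deriv_fun_div (by fun_prop (disch := assumption)) (by fun_prop) ht]
    simp only [deriv_log', ht, ne_eq, not_false_eq_true, inv_mul_cancel₀, deriv_id'', mul_one]
    ring
  have hsum : ∀ t : ℝ, ∑ k ∈ Finset.Icc 0 ⌊t⌋₊, Function.update a 0 0 k
      = ∑ n ∈ Finset.Icc 1 ⌊t⌋₊, a n := fun t => by
    simpa using sum_Icc_zero_mul_update_zero 1 a ⌊t⌋₊
  have hdiff : ∀ t ∈ Icc 1 x, DifferentiableAt ℝ (fun u => log u / u) t := fun t ht => by
    have : t ≠ 0 := by linarith [ht.1]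
    fun_prop (disch := assumption)
  have hint : IntegrableOn (deriv fun u => log u / u) (Icc 1 x) :=
    (continuousOn_log_sub_one_div_sq.mono fun _ ht => one_pos.trans_le ht.1).neg.integrableOn_Icc
      |>.congr_fun (fun t ht => (hderiv t (by linarith [ht.1])).symm) measurableSet_Icc
  -- Mathlib's Abel summation sums from `k = 0`; replacing `a 0` by `0` makes it start at `1`
  have habel := sum_mul_eq_sub_integral_mul₀ (Function.update a 0 0) (Function.update_self ..) x
    hdiff hint
  rw [sum_Icc_zero_mul_update_zero, hsum, ← intervalIntegral.integral_of_le hx] at habel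
  rw [integral_congr (g := fun t => -((log t - 1) / t ^ 2 * ∑ n ∈ Finset.Icc 1 ⌊t⌋₊, a n))
    fun t ht => ?_, intervalIntegral.integral_neg, sub_neg_eq_add] at habel
  · simpa only [mul_comm, mul_div_assoc] using habel
  · rw [hderiv t (by linarith [(uIcc_of_le hx ▸ ht).1]), hsum, neg_mul]

theorem stmt_4_general (a b : ℕ → ℝ) (ha : ∀ n, 0 ≤ a n) (c : ℝ) (hc : 0 < c)
    (hB : Tendsto (fun x : ℝ =>
        (∑ n ∈ Finset.Icc 1 ⌊x⌋₊, b n) / (x / Real.log x)) atTop (nhds 1))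
    (hratio : Tendsto (fun x : ℝ =>
        (∑ n ∈ Finset.Icc 1 ⌊x⌋₊, a n) / (∑ n ∈ Finset.Icc 1 ⌊x⌋₊, b n))
      atTop (nhds c)) :
    Tendsto (fun x : ℝ =>
        (∑ n ∈ Finset.Icc 1 ⌊x⌋₊, a n * Real.log n / n)
          / (c * (Real.log x - Real.log (Real.log x)))) atTop (nhds 1) := by
  set A : ℝ → ℝ := fun t => ∑ n ∈ Finset.Icc 1 ⌊t⌋₊, a n
  have hAmono : Monotone A := fun s t hst =>
    Finset.sum_le_sum_of_subset_of_nonneg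
      (Finset.Icc_subset_Icc le_rfl (Nat.floor_le_floor hst)) fun n _ _ => ha n
  have hAc : Tendsto (fun x => A x / (x / log x)) atTop (𝓝 c) :=
    (IsEquivalent.refl.div (isEquivalent_of_tendsto_one hB)).tendsto_nhds hratio
  have hcL := tendsto_log_sub_log_log_atTop.const_mul_atTop hc
  have hboundary : (fun x => log x / x * A x) =o[atTop] fun x => c * (log x - log (log x)) :=
    ((hAc.congr fun x => by rw [div_div_eq_mul_div]; ring).isBigO_one ℝ).trans_isLittleO
      ((isLittleO_one_left_iff ℝ).mpr (tendsto_norm_atTop_atTop.comp hcL))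
  have hS := hboundary.add_isEquivalent
    (isEquivalent_integral_log_sub_one_div_sq_mul hc (fun s t => hAmono.intervalIntegrable) hAc)
  refine (isEquivalent_iff_tendsto_one (hcL.eventually_ne_atTop 0)).mp (hS.congr_left ?_)
  filter_upwards [eventually_ge_atTop 1] with x hx
  exact (sum_Icc_mul_log_div_eq a hx).symm

/-- Let `(a_n)`, `(b_n)` be nonnegative sequences with `a_n ≤ b_n`.
If `∑_{n ≤ x} b_n ∼ x/log x` and `(∑_{n ≤ x} a_n)/(∑_{n ≤ x} b_n) → c > 0`, then
`∑_{n ≤ x} a_n·(log n)/n ∼ c·(log x − log log x)` as `x → ∞`. -/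
theorem stmt_4 (a b : ℕ → ℝ) (ha : ∀ n, 0 ≤ a n) (hb : ∀ n, 0 ≤ b n)
    (hab : ∀ n, a n ≤ b n) (c : ℝ) (hc : 0 < c)
    (hB : Tendsto (fun x : ℝ =>
        (∑ n ∈ Finset.Icc 1 ⌊x⌋₊, b n) / (x / Real.log x)) atTop (nhds 1))
    (hratio : Tendsto (fun x : ℝ =>
        (∑ n ∈ Finset.Icc 1 ⌊x⌋₊, a n) / (∑ n ∈ Finset.Icc 1 ⌊x⌋₊, b n))
      atTop (nhds c)) :
    Tendsto (fun x : ℝ =>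
        (∑ n ∈ Finset.Icc 1 ⌊x⌋₊, a n * Real.log n / n)
          / (c * (Real.log x - Real.log (Real.log x)))) atTop (nhds 1) :=
  stmt_4_general a b ha c hc hB hratio
end
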